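/- For α ∈ (0,1) and fixed j with 1 ≤ j ≤ n−1, the graded-grid weight b̂_{n,j} = φ_{n,j}(α,r) − φ_{n,j+1}(α,r), where φ_{n,j}(α,r) = ((n^r−(j−1)^r)^{α+1} − (n^r−j^r)^{α+1})/(j^r−(j−1)^r), is nonnegative for every real r ≥ 1. -/

import Mathlib

/-!
The weight is a difference of two consecutive divided differences of the convex
function `u x = (n ^ r - x) ^ (α + 1)` over the increasing nodes `(j - 1) ^ r < j ^ r < (j + 1) ^ r`
of `[0, n ^ r]`. Slopes of a convex function increase from left to right, so the negated slopes
`φ j` decrease in `j`.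
-/

open Set

theorem ConvexOn.sub_div_sub_le_sub_div_sub_adjacent {s : Set ℝ} {f : ℝ → ℝ}
    (hf : ConvexOn ℝ s f) {x y z : ℝ} (hx : x ∈ s) (hz : z ∈ s) (hxy : x < y) (hyz : y < z) :
    (f y - f z) / (z - y) ≤ (f x - f y) / (y - x) := by
  rw [← neg_sub (f z), ← neg_sub (f y) (f x), neg_div, neg_div]
  exact neg_le_neg (hf.slope_mono_adjacent hx hz hxy hyz)

theorem convexOn_const_sub_rpow {p : ℝ} (hp : 1 ≤ p) (N : ℝ) :
    ConvexOn ℝ (Iic N) fun x => (N - x) ^ p := by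
  have h := (convexOn_rpow hp).comp_affineMap (AffineMap.const ℝ ℝ N - AffineMap.id ℝ ℝ)
  have hpre : (AffineMap.const ℝ ℝ N - AffineMap.id ℝ ℝ) ⁻¹' Ici 0 = Iic N := by
    ext x
    simp
  rwa [hpre] at h

theorem graded_weights_nonneg_general (α r : ℝ) (hα : 0 < α) (hr : 1 ≤ r)
    (n j : ℕ) (hj : 1 ≤ j) (hjn : j ≤ n - 1)
    (φ : ℕ → ℝ)
    (hφ : ∀ i : ℕ, φ i =
      (((n : ℝ) ^ r - ((i : ℝ) - 1) ^ r) ^ (α + 1) - ((n : ℝ) ^ r - (i : ℝ) ^ r) ^ (α + 1)) /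
        ((i : ℝ) ^ r - ((i : ℝ) - 1) ^ r)) :
    0 ≤ φ j - φ (j + 1) := by
  have hr0 : 0 < r := by linarith
  have hj1 : (1 : ℝ) ≤ j := by exact_mod_cast hj
  have hjn' : (j : ℝ) + 1 ≤ n := by exact_mod_cast (by omega : j + 1 ≤ n)
  have hconv := convexOn_const_sub_rpow (by linarith : 1 ≤ α + 1) ((n : ℝ) ^ r)
  have hslopes := hconv.sub_div_sub_le_sub_div_sub_adjacent (y := (j : ℝ) ^ r)
    (Real.rpow_le_rpow (by linarith) (by linarith : (j : ℝ) - 1 ≤ n) hr0.le)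
    (Real.rpow_le_rpow (by linarith) hjn' hr0.le)
    (Real.rpow_lt_rpow (by linarith) (by linarith) hr0)
    (Real.rpow_lt_rpow (by linarith) (by linarith) hr0)
  rw [hφ, hφ, Nat.cast_succ, add_sub_cancel_right]
  exact sub_nonneg.mpr hslopes

/-- Interior weights of the product-integration trapezoidal rule on a graded
mesh: for `α ∈ (0,1)`, `r ≥ 1`, and `1 ≤ j ≤ n−1`, the weight
`b̂_{n,j} = φ_{n,j}(α,r) − φ_{n,j+1}(α,r)` with
`φ_{n,j} = ((n^r−(j−1)^r)^{α+1} − (n^r−j^r)^{α+1})/(j^r−(j−1)^r)`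
is nonnegative. -/
theorem graded_weights_nonneg (α r : ℝ) (hα : 0 < α) (hα1 : α < 1) (hr : 1 ≤ r)
    (n j : ℕ) (hj : 1 ≤ j) (hjn : j ≤ n - 1) (hn : 1 ≤ n)
    (φ : ℕ → ℝ)
    (hφ : ∀ i : ℕ, φ i =
      (((n : ℝ) ^ r - ((i : ℝ) - 1) ^ r) ^ (α + 1) - ((n : ℝ) ^ r - (i : ℝ) ^ r) ^ (α + 1)) /
        ((i : ℝ) ^ r - ((i : ℝ) - 1) ^ r)) :
    0 ≤ φ j - φ (j + 1) :=
  graded_weights_nonneg_general α r hα hr n j hj hjn φ hφ
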